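/- Consider the Slicer Map dynamics: for x ∈ [1/2, 1) with m̄ = m̄_α(x), the cell index of the trajectory starting at (x, 0) equals k for times 0 ≤ k < m̄, and for k ≥ m̄ equals m̄ if k − m̄ is even and m̄ − 1 if k − m̄ is odd. Consequently every such trajectory is eventually periodic with period 2. -/
import Mathlib


/-- Slicer position ℓ_m(α) = (|m| + 2^(1/α))^(-α). -/
noncomputable def ellS (α : ℝ) (m : ℤ) : ℝ := ((|m| : ℤ) + (2 : ℝ) ^ (1/α)) ^ (-α)

/-- The Slicer Map S_α on [0,1] × ℤ. -/
noncomputable def slicer (α : ℝ) (p : ℝ × ℤ) : ℝ × ℤ :=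
  if p.1 ≤ ellS α p.2 ∨ (1/2 < p.1 ∧ p.1 ≤ 1 - ellS α p.2) then (p.1, p.2 - 1)
  else (p.1, p.2 + 1)

/-- m̄_α(x) = min { m ∈ ℕ : 1 - ℓ_m(α) ≥ x } -/
noncomputable def mbar (α x : ℝ) : ℕ := sInf {m : ℕ | x ≤ 1 - ellS α m}

lemma ellS_eq (α : ℝ) (m : ℤ) : ellS α m = ((|m| : ℝ) + (2 : ℝ) ^ (1/α)) ^ (-α) := by
  simp [ellS]

lemma two_rpow_pos (α : ℝ) : 0 < (2 : ℝ) ^ (1/α) := Real.rpow_pos_of_pos two_pos _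

lemma base_rpow (α : ℝ) (hα : α ≠ 0) : ((2:ℝ) ^ (1/α)) ^ (-α) = 1/2 := by
  rw [← Real.rpow_mul (by norm_num : (0:ℝ) ≤ 2)]
  rw [show (1/α) * (-α) = -1 by field_simp]
  norm_num [Real.rpow_neg_one]

lemma ellS_zero (α : ℝ) (hα : α ≠ 0) : ellS α 0 = 1/2 := by
  rw [ellS_eq]
  simpa using base_rpow α hα

lemma ellS_pos (α : ℝ) (m : ℤ) : 0 < ellS α m := by
  rw [ellS_eq]
  apply Real.rpow_pos_of_pos
  have := two_rpow_pos α
  have : (0:ℝ) ≤ |m| := by positivity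
  positivity

lemma ellS_le_half (α : ℝ) (hα : 0 < α) (m : ℤ) : ellS α m ≤ 1/2 := by
  rw [ellS_eq, ← base_rpow α hα.ne']
  apply Real.rpow_le_rpow_of_nonpos (two_rpow_pos α)
  · have h0 : (0:ℝ) ≤ |(m:ℝ)| := abs_nonneg _
    linarith
  · linarith

lemma ellS_neg_one_lt_half (α : ℝ) (hα : 0 < α) : ellS α (-1) < 1/2 := by
  rw [ellS_eq, ← base_rpow α hα.ne']
  apply Real.rpow_lt_rpow_of_neg (two_rpow_pos α)
  · norm_num
  · linarith

theorem stmt_14 (α : ℝ) (hα : 0 < α) (x : ℝ) (hx : x ∈ Set.Ico (1/2 : ℝ) 1) :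
    (∀ k : ℕ, ((slicer α)^[k] (x, 0)).2 =
      if k < mbar α x then (k : ℤ)
      else if (k - mbar α x) % 2 = 0 then (mbar α x : ℤ) else (mbar α x : ℤ) - 1) ∧
    (∀ k : ℕ, mbar α x ≤ k →
      (slicer α)^[k + 2] (x, 0) = (slicer α)^[k] (x, 0)) := by
  obtain ⟨hx1, hx2⟩ := hx
  set M := mbar α x with hM
  -- nonemptiness of the defining set
  have htx : 0 < 1 - x := by linarith
  have hne : Set.Nonempty {m : ℕ | x ≤ 1 - ellS α m} := by
    set N : ℕ := ⌈(1 - x) ^ (-(1/α))⌉₊ with hN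
    refine ⟨N, ?_⟩
    have hb : 0 < (1 - x) ^ (-(1/α)) := Real.rpow_pos_of_pos htx _
    have key : ellS α (N:ℤ) ≤ 1 - x := by
      rw [ellS_eq]
      have habs : |(((N:ℤ)):ℝ)| = (N:ℝ) := by
        push_cast
        exact abs_of_nonneg (by positivity)
      rw [habs]
      have hle : (1 - x) ^ (-(1/α)) ≤ (N:ℝ) + (2:ℝ) ^ (1/α) := by
        have h1 : (1 - x) ^ (-(1/α)) ≤ (N:ℝ) := Nat.le_ceil _
        have h2 := two_rpow_pos α
        linarith
      calc ((N:ℝ) + (2:ℝ) ^ (1/α)) ^ (-α)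
          ≤ ((1 - x) ^ (-(1/α))) ^ (-α) :=
            Real.rpow_le_rpow_of_nonpos hb hle (by linarith)
        _ = 1 - x := by
            rw [← Real.rpow_mul htx.le, show -(1/α) * (-α) = 1 by field_simp]
            exact Real.rpow_one _
    simp only [Set.mem_setOf_eq]
    linarith
  have hmem : x ≤ 1 - ellS α M := Nat.sInf_mem hne
  have hmin : ∀ m : ℕ, m < M → 1 - ellS α m < x := by
    intro m hm
    have := Nat.notMem_of_lt_sInf (s := {m : ℕ | x ≤ 1 - ellS α m}) hm
    simpa using this
  -- step lemmas
  have step1 : ∀ m : ℕ, m < M → slicer α (x, (m:ℤ)) = (x, (m:ℤ) + 1) := by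
    intro m hm
    have h1 := hmin m hm
    have h2 := ellS_le_half α hα m
    simp only [slicer]
    rw [if_neg]
    push_neg
    constructor
    · linarith
    · intro _; linarith
  have step2 : slicer α (x, (M:ℤ)) = (x, (M:ℤ) - 1) := by
    simp only [slicer]
    rw [if_pos]
    by_cases h : 1/2 < x
    · exact Or.inr ⟨h, hmem⟩
    · have hxeq : x = 1/2 := le_antisymm (not_lt.mp h) hx1
      left
      have hM0 : M = 0 := by
        rw [hM, mbar, Nat.sInf_eq_zero]
        left
        simp only [Set.mem_setOf_eq, Nat.cast_zero]
        rw [ellS_zero α hα.ne', hxeq]; norm_num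
      rw [hM0, hxeq]
      simp [ellS_zero α hα.ne']
  have step3 : slicer α (x, (M:ℤ) - 1) = (x, (M:ℤ)) := by
    rcases Nat.eq_zero_or_pos M with hM0 | hMpos
    · have hxeq : x = 1/2 := by
        have := hmem
        rw [hM0] at this
        simp only [Nat.cast_zero] at this
        rw [ellS_zero α hα.ne'] at this
        linarith
      have hlt := ellS_neg_one_lt_half α hα
      rw [hM0]
      simp only [slicer, Nat.cast_zero, zero_sub]
      rw [if_neg]
      · norm_num
      push_neg
      constructor
      · rw [hxeq]; linarith
      · intro h; rw [hxeq] at h; linarith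
    · obtain ⟨n, hn⟩ : ∃ n, M = n + 1 := ⟨M - 1, by omega⟩
      have h1 := hmin n (by omega)
      have h2 := ellS_le_half α hα n
      rw [hn]
      have hcast : ((n + 1 : ℕ):ℤ) - 1 = (n:ℤ) := by push_cast; ring
      rw [hcast]
      simp only [slicer]
      rw [if_neg]
      · simp only [Prod.mk.injEq]
        refine ⟨trivial, by push_cast; ring⟩
      push_neg
      constructor
      · linarith
      · intro _; linarith
  -- trajectory formula
  have key : ∀ k : ℕ, (slicer α)^[k] (x, 0) =
      (x, if k < M then (k : ℤ) else if (k - M) % 2 = 0 then (M : ℤ) else (M : ℤ) - 1) := by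
    intro k
    induction k with
    | zero =>
      simp only [Function.iterate_zero, id_eq]
      simp only [Prod.mk.injEq]
      refine ⟨trivial, ?_⟩
      split_ifs <;> omega
    | succ k ih =>
      rw [Function.iterate_succ_apply', ih]
      by_cases hk : k < M
      · rw [if_pos hk, step1 k hk]
        simp only [Prod.mk.injEq]
        refine ⟨trivial, ?_⟩
        split_ifs <;> omega
      · rw [if_neg hk]
        by_cases hp : (k - M) % 2 = 0
        · rw [if_pos hp, step2]
          simp only [Prod.mk.injEq]
          refine ⟨trivial, ?_⟩
          split_ifs <;> omega
        · rw [if_neg hp, step3]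
          simp only [Prod.mk.injEq]
          refine ⟨trivial, ?_⟩
          split_ifs <;> omega
  constructor
  · intro k; rw [key k]
  · intro k hk
    rw [key (k + 2), key k]
    congr 1
    split_ifs <;> omega
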